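/- Any guarded pre-iterative monad satisfying naturality, codiagonal, and uniformity also satisfies the Bekić identity: (T[id+inl, inr∘inr] ∘ [f, g])† = [h†, [η, h†]* ∘ g†], where f : X → T((Y+X)+Z) and g : Z → T((Y+X)+Z) are both guarded in the summand [inl∘inr, inr], and h = [η, g†]* ∘ f : X → T(Y+X) (which is then inr-guarded). -/

import Mathlib

open CategoryTheory CategoryTheory.Limits

universe v u

/-- `(σ, σ')` form a binary coproduct cospan, i.e. a summand together with its complement. -/
def IsCoprodCospan {C : Type u} [Category.{v} C] {Y' Y'' Y : C}
    (σ : Y' ⟶ Y) (σ' : Y'' ⟶ Y) : Prop :=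
  Nonempty (IsColimit (BinaryCofan.mk σ σ'))

/-- A monad on `C`, presented as a Kleisli triple. -/
structure KMonad (C : Type u) [Category.{v} C] where
  obj : C → C
  η : ∀ X : C, X ⟶ obj X
  bind : ∀ {X Y : C}, (X ⟶ obj Y) → (obj X ⟶ obj Y)
  η_bind : ∀ {X Y : C} (f : X ⟶ obj Y), η X ≫ bind f = f
  bind_η : ∀ X : C, bind (η X) = 𝟙 (obj X)
  bind_comp : ∀ {X Y Z : C} (f : X ⟶ obj Y) (g : Y ⟶ obj Z),
      bind (f ≫ bind g) = bind f ≫ bind g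

/-- An abstractly guarded monad: its Kleisli category carries a notion of abstract
guardedness, i.e. a relation `guarded f σ σ'` between Kleisli morphisms
`f : X ⟶ obj Y` and summands `σ : Y' ⟶ Y` (with chosen complement `σ' : Y'' ⟶ Y`)
closed under the rules (trv), (par) and (cmp), where the coproducts in the Kleisli
category are inherited from `C` (with injections `η ∘ inj`). -/
structure GMonad (C : Type u) [Category.{v} C] extends KMonad C where
  guarded : ∀ {X Y' Y'' Y : C}, (X ⟶ obj Y) → (Y' ⟶ Y) → (Y'' ⟶ Y) → Prop
  trv : ∀ {X Y Z P : C} (i₁ : Y ⟶ P) (i₂ : Z ⟶ P), IsCoprodCospan i₁ i₂ →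
      ∀ f : X ⟶ obj Y, guarded (f ≫ bind (i₁ ≫ η P)) i₂ i₁
  par : ∀ {X Y P Z' Z'' Z : C} (j₁ : X ⟶ P) (j₂ : Y ⟶ P), IsCoprodCospan j₁ j₂ →
      ∀ (σ : Z' ⟶ Z) (σ' : Z'' ⟶ Z) (u : P ⟶ obj Z),
      guarded (j₁ ≫ u) σ σ' → guarded (j₂ ≫ u) σ σ' → guarded u σ σ'
  cmp : ∀ {X Y Z P V' V'' V : C} (i₁ : Y ⟶ P) (i₂ : Z ⟶ P), IsCoprodCospan i₁ i₂ →
      ∀ (σ : V' ⟶ V) (σ' : V'' ⟶ V) (f : X ⟶ obj P) (u : P ⟶ obj V),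
      guarded f i₂ i₁ → guarded (i₁ ≫ u) σ σ' → guarded (f ≫ bind u) σ σ'

/-- A guarded pre-iterative monad: every `inr`-guarded `f : X ⟶ T(Y+X)` has a chosen
solution `iter f hf` satisfying the fixpoint identity `f† = [η, f†]* ∘ f`. -/
structure PIMonad (C : Type u) [Category.{v} C] [HasBinaryCoproducts C]
    extends GMonad C where
  iter : ∀ {X Y : C} (f : X ⟶ obj (Y ⨿ X)),
      guarded f (coprod.inr : X ⟶ Y ⨿ X) coprod.inl → (X ⟶ obj Y)
  iter_fixpoint : ∀ {X Y : C} (f : X ⟶ obj (Y ⨿ X))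
      (hf : guarded f (coprod.inr : X ⟶ Y ⨿ X) coprod.inl),
      iter f hf = f ≫ bind (coprod.desc (η Y) (iter f hf))

/-- A guarded iterative monad: solutions of `inr`-guarded morphisms are unique. -/
structure IMonad (C : Type u) [Category.{v} C] [HasBinaryCoproducts C]
    extends PIMonad C where
  iter_unique : ∀ {X Y : C} (f : X ⟶ obj (Y ⨿ X))
      (hf : guarded f (coprod.inr : X ⟶ Y ⨿ X) coprod.inl) (s : X ⟶ obj Y),
      s = f ≫ bind (coprod.desc (η Y) s) → s = iter f hf

/-- A monad morphism, in Kleisli-triple form. -/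
structure KMonadHom {C : Type u} [Category.{v} C] (T S : KMonad C) where
  app : ∀ X : C, T.obj X ⟶ S.obj X
  app_η : ∀ X : C, T.η X ≫ app X = S.η X
  app_bind : ∀ (X Y : C) (f : X ⟶ T.obj Y),
      T.bind f ≫ app Y = app X ≫ S.bind (f ≫ app Y)

/-- The naturality law of iteration:
`g* ∘ f† = ([T(inl) ∘ g, η ∘ inr]* ∘ f)†` for inr-guarded `f : X ⟶ T(Y+X)` and
`g : Y ⟶ T Z`. -/
def PIMonad.Naturality {C : Type u} [Category.{v} C] [HasBinaryCoproducts C]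
    (T : PIMonad C) : Prop :=
  ∀ (X Y Z : C) (f : X ⟶ T.obj (Y ⨿ X))
    (hf : T.guarded f (coprod.inr : X ⟶ Y ⨿ X) coprod.inl)
    (g : Y ⟶ T.obj Z)
    (h' : T.guarded
        (f ≫ T.bind (coprod.desc (g ≫ T.bind (coprod.inl ≫ T.η (Z ⨿ X)))
          (coprod.inr ≫ T.η (Z ⨿ X))))
        (coprod.inr : X ⟶ Z ⨿ X) coprod.inl),
    T.iter f hf ≫ T.bind g = T.iter _ h'

/-- The dinaturality law of iteration:
`([η ∘ inl, h]* ∘ g)† = [η, ([η ∘ inl, g]* ∘ h)†]* ∘ g`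
for `g : X ⟶ T(Y+Z)`, `h : Z ⟶ T(Y+X)` with `g` inr-guarded or `h` inr-guarded. -/
def PIMonad.Dinaturality {C : Type u} [Category.{v} C] [HasBinaryCoproducts C]
    (T : PIMonad C) : Prop :=
  ∀ (X Y Z : C) (g : X ⟶ T.obj (Y ⨿ Z)) (h : Z ⟶ T.obj (Y ⨿ X)),
    (T.guarded g (coprod.inr : Z ⟶ Y ⨿ Z) coprod.inl ∨
      T.guarded h (coprod.inr : X ⟶ Y ⨿ X) coprod.inl) →
    ∀ (hu : T.guarded (g ≫ T.bind (coprod.desc (coprod.inl ≫ T.η (Y ⨿ X)) h))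
        (coprod.inr : X ⟶ Y ⨿ X) coprod.inl)
      (hv : T.guarded (h ≫ T.bind (coprod.desc (coprod.inl ≫ T.η (Y ⨿ Z)) g))
        (coprod.inr : Z ⟶ Y ⨿ Z) coprod.inl),
    T.iter _ hu = g ≫ T.bind (coprod.desc (T.η Y) (T.iter _ hv))

/-- The codiagonal law of iteration: `(T[id, inr] ∘ f)† = f††` for
`f : X ⟶ T((Y+X)+X)` guarded in the summand `[inl ∘ inr, inr]`. -/
def PIMonad.Codiagonal {C : Type u} [Category.{v} C] [HasBinaryCoproducts C]
    (T : PIMonad C) : Prop :=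
  ∀ (X Y : C) (f : X ⟶ T.obj ((Y ⨿ X) ⨿ X))
    (_h12 : T.guarded f
        (coprod.desc (coprod.inr ≫ coprod.inl) coprod.inr : X ⨿ X ⟶ (Y ⨿ X) ⨿ X)
        (coprod.inl ≫ coprod.inl : Y ⟶ (Y ⨿ X) ⨿ X))
    (h1 : T.guarded f (coprod.inr : X ⟶ (Y ⨿ X) ⨿ X) coprod.inl)
    (h2 : T.guarded (T.iter f h1) (coprod.inr : X ⟶ Y ⨿ X) coprod.inl)
    (h3 : T.guarded (f ≫ T.bind (coprod.desc (𝟙 (Y ⨿ X)) coprod.inr ≫ T.η (Y ⨿ X)))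
        (coprod.inr : X ⟶ Y ⨿ X) coprod.inl),
    T.iter _ h3 = T.iter (T.iter f h1) h2

/-- The uniformity law of iteration: `f ∘ h = T(id + h) ∘ g` implies `f† ∘ h = g†`
for inr-guarded `f : X ⟶ T(Y+X)`, inr-guarded `g : Z ⟶ T(Y+Z)`, and `h : Z ⟶ X`. -/
def PIMonad.Uniformity {C : Type u} [Category.{v} C] [HasBinaryCoproducts C]
    (T : PIMonad C) : Prop :=
  ∀ (X Y Z : C) (f : X ⟶ T.obj (Y ⨿ X))
    (hf : T.guarded f (coprod.inr : X ⟶ Y ⨿ X) coprod.inl)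
    (g : Z ⟶ T.obj (Y ⨿ Z))
    (hg : T.guarded g (coprod.inr : Z ⟶ Y ⨿ Z) coprod.inl)
    (h : Z ⟶ X),
    h ≫ f = g ≫ T.bind (coprod.map (𝟙 Y) h ≫ T.η (Y ⨿ X)) →
    h ≫ T.iter f hf = T.iter g hg

/-- The Bekić identity: `(T[id+inl, inr ∘ inr] ∘ [f, g])† = [h†, [η, h†]* ∘ g†]`, where
`f : X ⟶ T((Y+X)+Z)` and `g : Z ⟶ T((Y+X)+Z)` are both guarded in the summand
`[inl ∘ inr, inr]`, and `h = [η, g†]* ∘ f : X ⟶ T(Y+X)` (which is then inr-guarded). -/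
def PIMonad.Bekic {C : Type u} [Category.{v} C] [HasBinaryCoproducts C]
    (T : PIMonad C) : Prop :=
  ∀ (X Y Z : C) (f : X ⟶ T.obj ((Y ⨿ X) ⨿ Z)) (g : Z ⟶ T.obj ((Y ⨿ X) ⨿ Z))
    (_hf : T.guarded f
        (coprod.desc (coprod.inr ≫ coprod.inl) coprod.inr : X ⨿ Z ⟶ (Y ⨿ X) ⨿ Z)
        (coprod.inl ≫ coprod.inl : Y ⟶ (Y ⨿ X) ⨿ Z))
    (_hg : T.guarded g
        (coprod.desc (coprod.inr ≫ coprod.inl) coprod.inr : X ⨿ Z ⟶ (Y ⨿ X) ⨿ Z)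
        (coprod.inl ≫ coprod.inl : Y ⟶ (Y ⨿ X) ⨿ Z))
    (hg' : T.guarded g (coprod.inr : Z ⟶ (Y ⨿ X) ⨿ Z) coprod.inl)
    (hh : T.guarded (f ≫ T.bind (coprod.desc (T.η (Y ⨿ X)) (T.iter g hg')))
        (coprod.inr : X ⟶ Y ⨿ X) coprod.inl)
    (hL : T.guarded
        (coprod.desc f g ≫ T.bind (coprod.desc (coprod.map (𝟙 Y) coprod.inl)
          (coprod.inr ≫ coprod.inr) ≫ T.η (Y ⨿ (X ⨿ Z))))
        (coprod.inr : X ⨿ Z ⟶ Y ⨿ (X ⨿ Z)) coprod.inl),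
    T.iter _ hL =
      coprod.desc (T.iter _ hh)
        (T.iter g hg' ≫ T.bind (coprod.desc (T.η Y) (T.iter _ hh)))

/-! Split the two recursion variables of `[f, g]` apart: `G = T((id + inl) + inr) ∘ [f, g]`
(`bekicLift f g`) sends the occurrences of `X ⨿ Z` to two separate copies, and merging the copies
again gives the left-hand side `L` of the Bekić identity, so `L† = G††` by the codiagonal law.
The inner iteration is computed componentwise: on `Z`, uniformity along `inr` and naturality give
`G† ∘ inr = T(id + inl) ∘ g†`, and then the fixpoint identity on `X` gives
`G† ∘ inl = T(id + inl) ∘ h`. Hence `G† = T(id + inl) ∘ [h, g†]`, whose iteration is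
`[h†, [η, h†]* ∘ g†]` by uniformity along `inl` and the fixpoint identity. -/

attribute [local simp] coprod.inl_desc coprod.inr_desc coprod.inl_desc_assoc
  coprod.inr_desc_assoc

lemma KMonad.bind_bind {C : Type u} [Category.{v} C] (T : KMonad C) {X Y Z : C}
    (f : X ⟶ T.obj Y) (g : Y ⟶ T.obj Z) : T.bind f ≫ T.bind g = T.bind (f ≫ T.bind g) :=
  (T.bind_comp f g).symm

attribute [local simp] KMonad.η_bind KMonad.bind_η KMonad.bind_bind

lemma IsCoprodCospan.inl_inr {C : Type u} [Category.{v} C] (X Y : C)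
    [HasBinaryCoproduct X Y] : IsCoprodCospan (coprod.inl : X ⟶ X ⨿ Y) coprod.inr :=
  ⟨coprodIsCoprod X Y⟩

lemma IsCoprodCospan.inl_inl_desc {C : Type u} [Category.{v} C] [HasBinaryCoproducts C]
    (Y X Z : C) :
    IsCoprodCospan (coprod.inl ≫ coprod.inl : Y ⟶ (Y ⨿ X) ⨿ Z)
      (coprod.desc (coprod.inr ≫ coprod.inl) coprod.inr) :=
  ⟨(coprodIsCoprod Y (X ⨿ Z)).ofIsoColimit
    (BinaryCofan.ext (coprod.associator Y X Z).symm (coprod.inl_desc _ _) (coprod.inr_desc _ _))⟩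

namespace GMonad

variable {C : Type u} [Category.{v} C] (T : GMonad C)

lemma guarded_comp_η {X Y' Y'' Y : C} {σ : Y' ⟶ Y} {σ' : Y'' ⟶ Y}
    (hσ : IsCoprodCospan σ' σ) (j : X ⟶ Y'') : T.guarded (j ≫ σ' ≫ T.η Y) σ σ' := by
  simpa using T.trv σ' σ hσ (j ≫ T.η Y'')

lemma guarded_bind {X Y₁ Y₂ Y V' V'' V : C} {σ₁ : Y₁ ⟶ Y} {σ₂ : Y₂ ⟶ Y}
    {τ : V' ⟶ V} {τ' : V'' ⟶ V} (hσ : IsCoprodCospan σ₁ σ₂) (hτ : IsCoprodCospan τ' τ)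
    {f : X ⟶ T.obj Y} (hf : T.guarded f σ₂ σ₁) {u : Y ⟶ T.obj V} (j : Y₁ ⟶ V'')
    (hu : σ₁ ≫ u = j ≫ τ' ≫ T.η V) : T.guarded (f ≫ T.bind u) τ τ' :=
  T.cmp σ₁ σ₂ hσ τ τ' f u hf (hu ▸ T.guarded_comp_η hτ j)

lemma guarded_desc {X Z V' V'' V : C} [HasBinaryCoproduct X Z] {σ : V' ⟶ V}
    {σ' : V'' ⟶ V} {f : X ⟶ T.obj V} {g : Z ⟶ T.obj V} (hf : T.guarded f σ σ')
    (hg : T.guarded g σ σ') : T.guarded (coprod.desc f g) σ σ' :=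
  T.par coprod.inl coprod.inr (IsCoprodCospan.inl_inr X Z) σ σ' _
    ((coprod.inl_desc f g).symm ▸ hf) ((coprod.inr_desc f g).symm ▸ hg)

variable [HasBinaryCoproducts C]

lemma guarded_inr_of_guarded_desc {V Y X Z : C} {f : V ⟶ T.obj ((Y ⨿ X) ⨿ Z)}
    (hf : T.guarded f (coprod.desc (coprod.inr ≫ coprod.inl) coprod.inr)
      (coprod.inl ≫ coprod.inl)) :
    T.guarded f coprod.inr coprod.inl := by
  simpa using T.guarded_bind (IsCoprodCospan.inl_inl_desc Y X Z)
    (IsCoprodCospan.inl_inr _ _) hf (u := T.η _) coprod.inl (by simp)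

end GMonad

namespace PIMonad

variable {C : Type u} [Category.{v} C] [HasBinaryCoproducts C] (T : PIMonad C)

lemma iter_congr {X Y : C} {f f' : X ⟶ T.obj (Y ⨿ X)} (e : f = f')
    (hf : T.guarded f coprod.inr coprod.inl) (hf' : T.guarded f' coprod.inr coprod.inl) :
    T.iter f hf = T.iter f' hf' := by
  subst e; rfl

lemma guarded_iter {X Y : C} {f : X ⟶ T.obj ((Y ⨿ X) ⨿ X)}
    (hf : T.guarded f (coprod.desc (coprod.inr ≫ coprod.inl) coprod.inr)
      (coprod.inl ≫ coprod.inl)) :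
    T.guarded (T.iter f (T.guarded_inr_of_guarded_desc hf)) coprod.inr coprod.inl := by
  rw [T.iter_fixpoint]
  exact T.guarded_bind (IsCoprodCospan.inl_inl_desc Y X X) (IsCoprodCospan.inl_inr _ _) hf
    (𝟙 Y) (by simp)

variable {T}

lemma Naturality.iter_map (hnat : T.Naturality) {Z W V : C}
    {g : Z ⟶ T.obj (W ⨿ Z)} (hg : T.guarded g coprod.inr coprod.inl) (k : W ⟶ V)
    (hgk : T.guarded (g ≫ T.bind (coprod.map k (𝟙 Z) ≫ T.η _)) coprod.inr coprod.inl) :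
    T.iter _ hgk = T.iter g hg ≫ T.bind (k ≫ T.η V) := by
  have e : coprod.map k (𝟙 Z) ≫ T.η _ =
      coprod.desc ((k ≫ T.η V) ≫ T.bind (coprod.inl ≫ T.η _)) (coprod.inr ≫ T.η _) := by
    ext <;> simp
  rw [hnat Z W V g hg (k ≫ T.η V) (e ▸ hgk)]
  exact T.iter_congr (by rw [e]) _ _

lemma Uniformity.iter_desc_map_inl (hunif : T.Uniformity) {X Y Z : C}
    {h : X ⟶ T.obj (Y ⨿ X)} (hh : T.guarded h coprod.inr coprod.inl) (k : Z ⟶ T.obj (Y ⨿ X))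
    (hk : T.guarded (coprod.desc h k ≫ T.bind (coprod.map (𝟙 Y) coprod.inl ≫ T.η _))
      coprod.inr coprod.inl) :
    T.iter _ hk = coprod.desc (T.iter h hh) (k ≫ T.bind (coprod.desc (T.η Y) (T.iter h hh))) := by
  have hl : coprod.inl ≫ T.iter _ hk = T.iter h hh :=
    hunif _ _ _ _ hk h hh coprod.inl (by simp)
  ext
  · simpa using hl
  · rw [T.iter_fixpoint]
    simp only [Category.assoc, coprod.inr_desc, coprod.inr_desc_assoc, KMonad.bind_bind,
      KMonad.η_bind, coprod.map_desc, Category.id_comp, hl]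

end PIMonad

section Bekic

variable {C : Type u} [Category.{v} C] [HasBinaryCoproducts C]

noncomputable def KMonad.bekicLift (T : KMonad C) {X Y Z : C} (f : X ⟶ T.obj ((Y ⨿ X) ⨿ Z))
    (g : Z ⟶ T.obj ((Y ⨿ X) ⨿ Z)) : X ⨿ Z ⟶ T.obj ((Y ⨿ (X ⨿ Z)) ⨿ (X ⨿ Z)) :=
  coprod.desc f g ≫ T.bind (coprod.map (coprod.map (𝟙 Y) coprod.inl) coprod.inr ≫ T.η _)

lemma KMonad.inl_bekicLift (T : KMonad C) {X Y Z : C} (f : X ⟶ T.obj ((Y ⨿ X) ⨿ Z))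
    (g : Z ⟶ T.obj ((Y ⨿ X) ⨿ Z)) :
    coprod.inl ≫ T.bekicLift f g =
      f ≫ T.bind (coprod.map (coprod.map (𝟙 Y) coprod.inl) coprod.inr ≫ T.η _) := by
  simp [KMonad.bekicLift]

lemma KMonad.inr_bekicLift (T : KMonad C) {X Y Z : C} (f : X ⟶ T.obj ((Y ⨿ X) ⨿ Z))
    (g : Z ⟶ T.obj ((Y ⨿ X) ⨿ Z)) :
    coprod.inr ≫ T.bekicLift f g =
      g ≫ T.bind (coprod.map (coprod.map (𝟙 Y) coprod.inl) coprod.inr ≫ T.η _) := by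
  simp [KMonad.bekicLift]

lemma KMonad.bekicLift_bind_desc_id_inr (T : KMonad C) {X Y Z : C}
    (f : X ⟶ T.obj ((Y ⨿ X) ⨿ Z)) (g : Z ⟶ T.obj ((Y ⨿ X) ⨿ Z)) :
    T.bekicLift f g ≫ T.bind (coprod.desc (𝟙 _) coprod.inr ≫ T.η (Y ⨿ (X ⨿ Z))) =
      coprod.desc f g ≫ T.bind (coprod.desc (coprod.map (𝟙 Y) coprod.inl)
        (coprod.inr ≫ coprod.inr) ≫ T.η _) := by
  simp [KMonad.bekicLift]

lemma GMonad.guarded_bekicLift (T : GMonad C) {X Y Z : C} {f : X ⟶ T.obj ((Y ⨿ X) ⨿ Z)}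
    {g : Z ⟶ T.obj ((Y ⨿ X) ⨿ Z)}
    (hf : T.guarded f (coprod.desc (coprod.inr ≫ coprod.inl) coprod.inr)
      (coprod.inl ≫ coprod.inl))
    (hg : T.guarded g (coprod.desc (coprod.inr ≫ coprod.inl) coprod.inr)
      (coprod.inl ≫ coprod.inl)) :
    T.guarded (T.bekicLift f g) (coprod.desc (coprod.inr ≫ coprod.inl) coprod.inr)
      (coprod.inl ≫ coprod.inl) :=
  T.guarded_bind (IsCoprodCospan.inl_inl_desc Y X Z) (IsCoprodCospan.inl_inl_desc _ _ _)
    (T.guarded_desc hf hg) (𝟙 Y) (by simp)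

lemma PIMonad.iter_bekicLift {T : PIMonad C} (hnat : T.Naturality) (hunif : T.Uniformity)
    {X Y Z : C} (f : X ⟶ T.obj ((Y ⨿ X) ⨿ Z)) (g : Z ⟶ T.obj ((Y ⨿ X) ⨿ Z))
    (hG : T.guarded (T.bekicLift f g) coprod.inr coprod.inl)
    (hg : T.guarded g coprod.inr coprod.inl) :
    T.iter _ hG = coprod.desc (f ≫ T.bind (coprod.desc (T.η (Y ⨿ X)) (T.iter g hg)))
      (T.iter g hg) ≫ T.bind (coprod.map (𝟙 Y) coprod.inl ≫ T.η _) := by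
  let k : Y ⨿ X ⟶ Y ⨿ (X ⨿ Z) := coprod.map (𝟙 Y) coprod.inl
  have hgk : T.guarded (g ≫ T.bind (coprod.map k (𝟙 Z) ≫ T.η _)) coprod.inr coprod.inl :=
    T.guarded_bind (IsCoprodCospan.inl_inr _ _) (IsCoprodCospan.inl_inr _ _) hg k (by simp)
  have hr : coprod.inr ≫ T.iter _ hG = T.iter g hg ≫ T.bind (k ≫ T.η _) :=
    (hunif _ _ _ _ hG _ hgk coprod.inr (by simp [k, KMonad.inr_bekicLift])).trans
      (hnat.iter_map hg k hgk)
  ext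
  · rw [T.iter_fixpoint, ← Category.assoc, KMonad.inl_bekicLift]
    simp [k, hr]
  · simpa using hr

end Bekic

theorem bekic_derivable {C : Type u} [Category.{v} C] [HasBinaryCoproducts C]
    (T : PIMonad C) (hnat : T.Naturality) (hcod : T.Codiagonal)
    (hunif : T.Uniformity) : T.Bekic := by
  intro X Y Z f g hf hg hg' hh hL
  have hG := T.guarded_bekicLift hf hg
  have hmerge := T.bekicLift_bind_desc_id_inr f g
  have hsplit := T.iter_bekicLift hnat hunif f g (T.guarded_inr_of_guarded_desc hG) hg'
  rw [← T.iter_congr hmerge (hmerge ▸ hL) hL, hcod _ _ _ hG _ (T.guarded_iter hG),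
    T.iter_congr hsplit _ (hsplit ▸ T.guarded_iter hG), hunif.iter_desc_map_inl hh]
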